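/- arXiv:2012.01807 — 3 statements merged into one kernel-verified Lean document; each statement's English description precedes it below -/
import Mathlib

section
/- The conditional mean of the standardized outcome given selection satisfies the Heckman inverse-Mills-ratio formula: ∫_{-∞}^{∞} z(y) · (1/(σ Φ(μ₂))) φ(z(y)) Φ(ζ(y)) dy = ρ φ(μ₂)/Φ(μ₂); equivalently, E(Y | U = 1) = μ₁ + ρ σ φ(μ₂)/Φ(μ₂). -/
/-!
Substituting `t = (y - μ₁) / σ` turns the claim into `∫ t φ(t) Φ(c + d t) dt = ρ φ(μ₂)`
with `c = μ₂ / √(1 - ρ²)` and `d = ρ / √(1 - ρ²)`. Integrating by parts against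
`φ' = -t φ` (Stein's identity) gives `d ∫ φ(t) φ(c + d t) dt`, and completing the square
evaluates this Gaussian integral as `φ(c / √(1 + d²)) / √(1 + d²)`. Since
`√(1 + d²) = 1 / √(1 - ρ²)`, the result is `ρ φ(μ₂)`.
-/

open MeasureTheory Set

/-- Standard normal density. -/
noncomputable def phi (t : ℝ) : ℝ := Real.exp (-(t ^ 2) / 2) / Real.sqrt (2 * Real.pi)

/-- Standard normal cumulative distribution function. -/
noncomputable def Phi (x : ℝ) : ℝ := ∫ t in Set.Iic x, phi t

open Real

lemma phi_eq_gaussianPDFReal : phi = ProbabilityTheory.gaussianPDFReal 0 1 := by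
  ext t
  simp [phi, ProbabilityTheory.gaussianPDFReal, div_eq_inv_mul]

lemma phi_pos (t : ℝ) : 0 < phi t := by
  unfold phi; positivity

lemma continuous_phi : Continuous phi := by
  unfold phi; fun_prop

lemma integrable_phi : Integrable phi := by
  rw [phi_eq_gaussianPDFReal]; exact ProbabilityTheory.integrable_gaussianPDFReal 0 1

lemma integral_phi : ∫ t, phi t = 1 := by
  rw [phi_eq_gaussianPDFReal]; exact ProbabilityTheory.integral_gaussianPDFReal_eq_one 0 one_ne_zero

lemma integrable_mul_phi : Integrable fun t => t * phi t := by
  have := (integrable_mul_exp_neg_mul_sq (by norm_num : (0:ℝ) < 1 / 2)).div_const √(2 * π)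
  refine this.congr (.of_forall fun t => ?_)
  simp only [phi]; ring_nf

lemma hasDerivAt_phi (t : ℝ) : HasDerivAt phi (-t * phi t) t := by
  have hexp : HasDerivAt (fun u : ℝ => -(u ^ 2) / 2) (-t) t :=
    ((hasDerivAt_pow 2 t).neg.div_const 2).congr_deriv (by push_cast; ring)
  exact (hexp.exp.div_const √(2 * π)).congr_deriv (by simp only [phi]; ring)

lemma Phi_nonneg (x : ℝ) : 0 ≤ Phi x :=
  setIntegral_nonneg measurableSet_Iic fun t _ => (phi_pos t).le

lemma Phi_le_one (x : ℝ) : Phi x ≤ 1 :=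
  integral_phi ▸ setIntegral_le_integral integrable_phi (.of_forall fun t => (phi_pos t).le)

lemma hasDerivAt_Phi (x : ℝ) : HasDerivAt Phi (phi x) x := by
  have hPhi : ∀ u, Phi 0 + ∫ t in (0 : ℝ)..u, phi t = Phi u := fun u => by
    rw [Phi, Phi, ← intervalIntegral.integral_Iic_sub_Iic integrable_phi.integrableOn
      integrable_phi.integrableOn]
    ring
  refine (HasDerivAt.const_add _ ?_).congr_of_eventuallyEq (.of_forall fun u => (hPhi u).symm)
  exact intervalIntegral.integral_hasDerivAt_right integrable_phi.intervalIntegrable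
    (continuous_phi.stronglyMeasurableAtFilter _ _) continuous_phi.continuousAt

lemma phi_mul_phi (x y : ℝ) : phi x * phi y = exp (-(x ^ 2 + y ^ 2) / 2) / (2 * π) := by
  rw [phi, phi, div_mul_div_comm, ← exp_add, mul_self_sqrt (by positivity)]
  ring_nf

lemma phi_mul_phi_eq_of_sq_add_sq_eq {x y u v : ℝ} (h : x ^ 2 + y ^ 2 = u ^ 2 + v ^ 2) :
    phi x * phi y = phi u * phi v := by
  rw [phi_mul_phi, phi_mul_phi, h]

/-- Completing the square in `t ^ 2 + (c + d * t) ^ 2`. -/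
lemma phi_mul_phi_affine (c d t : ℝ) :
    phi t * phi (c + d * t) =
      phi (c / √(1 + d ^ 2)) * phi (√(1 + d ^ 2) * t + c * d / √(1 + d ^ 2)) := by
  have hs : 0 < √(1 + d ^ 2) := sqrt_pos.2 (by positivity)
  have hss : √(1 + d ^ 2) ^ 2 = 1 + d ^ 2 := sq_sqrt (by positivity)
  refine phi_mul_phi_eq_of_sq_add_sq_eq ?_
  field_simp
  linear_combination (c ^ 2 - t ^ 2 * √(1 + d ^ 2) ^ 2) * hss

lemma integral_phi_comp_mul_add {a : ℝ} (ha : 0 < a) (b : ℝ) :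
    ∫ t, phi (a * t + b) = a⁻¹ := by
  rw [Measure.integral_comp_mul_left (fun t => phi (t + b)), integral_add_right_eq_self,
    integral_phi, smul_eq_mul, mul_one, abs_of_pos (inv_pos.2 ha)]

lemma integrable_phi_mul_phi_affine (c d : ℝ) :
    Integrable fun t => phi t * phi (c + d * t) := by
  have hs : 0 < √(1 + d ^ 2) := sqrt_pos.2 (by positivity)
  simp_rw [phi_mul_phi_affine c d]
  exact ((integrable_phi.comp_add_right _).comp_mul_left' hs.ne').const_mul _

lemma integral_phi_mul_phi_affine (c d : ℝ) :
    ∫ t, phi t * phi (c + d * t) = phi (c / √(1 + d ^ 2)) / √(1 + d ^ 2) := by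
  have hs : 0 < √(1 + d ^ 2) := sqrt_pos.2 (by positivity)
  simp_rw [phi_mul_phi_affine c d, integral_const_mul, integral_phi_comp_mul_add hs,
    div_eq_mul_inv]

lemma integral_mul_phi_mul_eq_integral_phi_mul_deriv {F F' : ℝ → ℝ} {C : ℝ}
    (hF : ∀ t, HasDerivAt F (F' t) t) (hFC : ∀ t, |F t| ≤ C)
    (hF' : Integrable fun t => phi t * F' t) :
    ∫ t, t * phi t * F t = ∫ t, phi t * F' t := by
  have hFm : AEStronglyMeasurable F :=
    (continuous_iff_continuousAt.2 fun t => (hF t).continuousAt).aestronglyMeasurable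
  have hmul : Integrable fun t => t * phi t * F t := integrable_mul_phi.mul_bdd hFm (.of_forall hFC)
  have hprod : Integrable fun t => phi t * F t := integrable_phi.mul_bdd hFm (.of_forall hFC)
  have hderiv : ∀ t, HasDerivAt (fun u => phi u * F u) (phi t * F' t - t * phi t * F t) t :=
    fun t => ((hasDerivAt_phi t).mul (hF t)).congr_deriv (by ring)
  have hftc := integral_eq_zero_of_hasDerivAt_of_integrable hderiv (hF'.sub hmul) hprod
  rw [integral_sub hF' hmul, sub_eq_zero] at hftc
  exact hftc.symm

lemma integral_mul_phi_mul_Phi_affine (c d : ℝ) :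
    ∫ t, t * phi t * Phi (c + d * t) = d * (phi (c / √(1 + d ^ 2)) / √(1 + d ^ 2)) := by
  have hderiv : ∀ t, HasDerivAt (fun u => Phi (c + d * u)) (phi (c + d * t) * d) t := fun t =>
    (hasDerivAt_Phi _).comp t
      (((hasDerivAt_id t).const_mul d).const_add c |>.congr_deriv (mul_one d))
  have hbound : ∀ t, |Phi (c + d * t)| ≤ 1 := fun t => by
    rw [abs_of_nonneg (Phi_nonneg _)]; exact Phi_le_one _
  rw [integral_mul_phi_mul_eq_integral_phi_mul_deriv hderiv hbound
      (by simpa only [← mul_assoc] using (integrable_phi_mul_phi_affine c d).mul_const d),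
    ← integral_phi_mul_phi_affine, ← integral_const_mul]
  congr 1; ext t; ring

lemma integral_mul_phi_mul_Phi_selection (μ₂ : ℝ) {ρ : ℝ} (hρ : ρ ^ 2 < 1) :
    ∫ t, t * phi t * Phi ((μ₂ + ρ * t) / √(1 - ρ ^ 2)) = ρ * phi μ₂ := by
  set s := √(1 - ρ ^ 2)
  have hs : 0 < s := sqrt_pos.2 (by linarith)
  have hss : s ^ 2 = 1 - ρ ^ 2 := sq_sqrt (by linarith)
  have hroot : √(1 + (ρ / s) ^ 2) = s⁻¹ := by
    rw [← sqrt_sq (inv_nonneg.2 hs.le)]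
    congr 1
    field_simp
    linarith
  simp_rw [add_div, mul_div_right_comm ρ, integral_mul_phi_mul_Phi_affine, hroot]
  field_simp

theorem GH_conditional_mean_inverse_Mills (μ₁ μ₂ σ ρ : ℝ) (hσ : 0 < σ) (hρ₁ : -1 < ρ) (hρ₂ : ρ < 1)
    (z ζ : ℝ → ℝ)
    (hz : ∀ y, z y = (y - μ₁) / σ)
    (hζ : ∀ y, ζ y = (μ₂ + ρ * z y) / Real.sqrt (1 - ρ ^ 2)) :
    (∫ y : ℝ, z y * ((1 / (σ * Phi μ₂)) * phi (z y) * Phi (ζ y)))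
      = ρ * phi μ₂ / Phi μ₂ := by
  set g : ℝ → ℝ := fun t => t * phi t * Phi ((μ₂ + ρ * t) / √(1 - ρ ^ 2))
  have hintegrand : ∀ y, z y * ((1 / (σ * Phi μ₂)) * phi (z y) * Phi (ζ y))
      = (1 / (σ * Phi μ₂)) * g ((y - μ₁) / σ) := fun y => by
    simp only [g, hζ, hz]; ring
  have hstandardize : ∫ y, g ((y - μ₁) / σ) = σ * ∫ t, g t := by
    rw [integral_sub_right_eq_self (fun u => g (u / σ)), Measure.integral_comp_div, abs_of_pos hσ,
      smul_eq_mul]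
  simp_rw [hintegrand, integral_const_mul, hstandardize, g,
    integral_mul_phi_mul_Phi_selection μ₂ (by nlinarith : ρ ^ 2 < 1)]
  field_simp
end

section
/- The sample-selection-bias-component (ρ-component) of the score function of the generalized Heckman model has conditional mean zero given selection: ∫_{-∞}^{∞} (z(y) + ρ μ₂) φ(ζ(y)) φ(z(y)) dy = 0. -/
/-!
Substituting `t = z(y)`, the exponent of `φ(ζ) φ(t)` is
`((μ₂ + ρ t)² + (1 - ρ²) t²) / (1 - ρ²) = μ₂² + (t + ρ μ₂)² / (1 - ρ²)`,
so it depends on `t` only through `(t + ρ μ₂)²`. The integrand is therefore the odd function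
`u ↦ u φ(μ₂) φ(u / √(1 - ρ²))` of `u = z(y) + ρ μ₂`, and its integral over the line vanishes.
-/

open MeasureTheory Set

theorem integral_eq_zero_of_comp_sub_eq_neg {G E : Type*} [MeasurableSpace G]
    [NormedAddCommGroup E] [NormedSpace ℝ E] [AddGroup G] [MeasurableAdd G] [MeasurableNeg G]
    (μ : Measure G) [μ.IsNegInvariant] [μ.IsAddLeftInvariant] {f : G → E} (c : G)
    (hf : ∀ x, f (c - x) = -f x) : ∫ x, f x ∂μ = 0 := by
  have hneg : ∫ x, f x ∂μ = -∫ x, f x ∂μ := calc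
    ∫ x, f x ∂μ = ∫ x, f (c - x) ∂μ := (integral_sub_left_eq_self f μ c).symm
    _ = -∫ x, f x ∂μ := by simp only [hf, integral_neg]
  have htwo : (2 : ℝ) • ∫ x, f x ∂μ = 0 := by
    rw [two_smul]
    nth_rewrite 2 [hneg]
    exact add_neg_cancel _
  exact (smul_eq_zero.mp htwo).resolve_left two_ne_zero

theorem phi_neg (t : ℝ) : phi (-t) = phi t := by
  simp only [phi, neg_sq]

theorem phi_mul_phi_eq_of_sq_add_sq_eq_s10 {a b a' b' : ℝ} (h : a ^ 2 + b ^ 2 = a' ^ 2 + b' ^ 2) :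
    phi a * phi b = phi a' * phi b' := by
  simp only [phi, div_mul_div_comm, ← Real.exp_add]
  rw [← add_div, ← add_div, ← neg_add, ← neg_add, h]

/-- Factorisation of the standard bivariate normal density with correlation `ρ` into the
marginal of the second coordinate and the conditional density of the first one. -/
theorem phi_mul_phi_factor (μ ρ t : ℝ) (hρ : 0 < 1 - ρ ^ 2) :
    phi ((μ + ρ * t) / Real.sqrt (1 - ρ ^ 2)) * phi t
      = phi μ * phi ((t + ρ * μ) / Real.sqrt (1 - ρ ^ 2)) := by
  apply phi_mul_phi_eq_of_sq_add_sq_eq_s10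
  rw [div_pow, div_pow, Real.sq_sqrt hρ.le]
  field_simp
  ring

theorem GH_rho_score_conditional_mean_zero (μ₁ μ₂ σ ρ : ℝ) (hσ : 0 < σ) (hρ₁ : -1 < ρ) (hρ₂ : ρ < 1)
    (z ζ : ℝ → ℝ)
    (hz : ∀ y, z y = (y - μ₁) / σ)
    (hζ : ∀ y, ζ y = (μ₂ + ρ * z y) / Real.sqrt (1 - ρ ^ 2)) :
    (∫ y : ℝ, (z y + ρ * μ₂) * phi (ζ y) * phi (z y)) = 0 := by
  have hρ : 0 < 1 - ρ ^ 2 := by nlinarith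
  have hfactor : ∀ y, (z y + ρ * μ₂) * phi (ζ y) * phi (z y)
      = (z y + ρ * μ₂) * phi μ₂ * phi ((z y + ρ * μ₂) / Real.sqrt (1 - ρ ^ 2)) := by
    intro y
    rw [hζ, mul_assoc, phi_mul_phi_factor μ₂ ρ (z y) hρ, mul_assoc]
  have hreflect : ∀ y, z (2 * (μ₁ - σ * ρ * μ₂) - y) + ρ * μ₂ = -(z y + ρ * μ₂) := by
    intro y
    rw [hz, hz]
    field_simp
    ring
  refine integral_eq_zero_of_comp_sub_eq_neg volume (2 * (μ₁ - σ * ρ * μ₂)) fun y => ?_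
  rw [hfactor, hfactor, hreflect, neg_div, phi_neg]
  ring
end

section
/- For all real numbers a and b, ∫_{-∞}^{∞} t φ(t) φ(a + b t) dt = −(a b/(1 + b²)^{3/2}) φ(a/√(1 + b²)). -/
open MeasureTheory Set

/-!
With `s = 1 + b²`, completing the square gives `φ(t) φ(a + bt) = φ(a/√s) φ(√s (t + ab/s))`.
Up to the constant `φ(a/√s)/√s`, the integrand is therefore `t` times the density of the normal
law with mean `-ab/s` and variance `1/s`, so the integral is that constant times `-ab/s`.
-/

open Real ProbabilityTheory

lemma integral_mul_gaussianPDFReal (μ : ℝ) {v : NNReal} (hv : v ≠ 0) :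
    ∫ x, x * gaussianPDFReal μ v x = μ := by
  simpa [integral_gaussianReal_eq_integral_smul hv, mul_comm] using
    integral_id_gaussianReal (μ := μ) (v := v)

lemma sqrt_mul_phi_eq_gaussianPDFReal {s : ℝ} (hs : 0 < s) (μ x : ℝ) :
    √s * phi (√s * (x - μ)) = gaussianPDFReal μ s⁻¹.toNNReal x := by
  rw [gaussianPDFReal, Real.coe_toNNReal _ (inv_nonneg.2 hs.le), phi, mul_pow, sq_sqrt hs.le,
    sqrt_mul' _ (inv_nonneg.2 hs.le), sqrt_inv]
  field_simp

lemma phi_mul_phi_add_mul (a b t : ℝ) :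
    phi t * phi (a + b * t)
      = phi (a / √(1 + b ^ 2)) * phi (√(1 + b ^ 2) * (t + a * b / (1 + b ^ 2))) := by
  have hs : 0 < 1 + b ^ 2 := by positivity
  simp only [phi, div_pow, mul_pow, sq_sqrt hs.le, div_mul_div_comm, ← exp_add]
  congr 2
  field_simp
  ring

lemma rpow_three_halves_eq_mul_sqrt {x : ℝ} (hx : 0 ≤ x) : x ^ ((3 : ℝ) / 2) = x * √x := by
  rw [show (3 : ℝ) / 2 = 1 + 1 / 2 by norm_num, rpow_add' hx (by norm_num), rpow_one,
    sqrt_eq_rpow]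

theorem gaussian_product_first_moment (a b : ℝ) :
    ∫ t : ℝ, t * phi t * phi (a + b * t)
      = -(a * b / (1 + b ^ 2) ^ ((3 : ℝ) / 2)) * phi (a / Real.sqrt (1 + b ^ 2)) := by
  set s := 1 + b ^ 2 with hs_def
  have hs : 0 < s := by positivity
  have hv : s⁻¹.toNNReal ≠ 0 := by simpa using hs
  calc ∫ t, t * phi t * phi (a + b * t)
      = ∫ t, phi (a / √s) / √s * (t * gaussianPDFReal (-(a * b / s)) s⁻¹.toNNReal t) := by
        congr 1 with t
        rw [mul_assoc, phi_mul_phi_add_mul, ← hs_def, ← sqrt_mul_phi_eq_gaussianPDFReal hs,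
          sub_neg_eq_add]
        field_simp
    _ = phi (a / √s) / √s * -(a * b / s) := by
        rw [integral_const_mul, integral_mul_gaussianPDFReal _ hv]
    _ = -(a * b / s ^ ((3 : ℝ) / 2)) * phi (a / √s) := by
        rw [rpow_three_halves_eq_mul_sqrt hs.le]
        field_simp
end
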